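/- arXiv:1304.3816 — 2 statements merged into one kernel-verified Lean document; each statement's English description precedes it below -/
import Mathlib

section
/- Suppose every online MA communication protocol P for the (n,n)-dense INDEX problem satisfies hcost(P)·vcost(P) = Ω(n). Then every online MA protocol P' for the (m,n)-sparse INDEX problem with hcost(P') ≥ log n satisfies hcost(P')·vcost(P')= Ω(m·log(n/m)). -/
/-!
Two reductions from dense INDEX. Embedding `Fin m` into `Fin n` turns an `m`-bit dense input
into an `m`-sparse one, so `c·m ≤ hcost·vcost`. With `b = ⌊log₂ (n/m)⌋`, so that `m·2^b ≤ n`, cut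
an `m·b`-bit dense input into `m` blocks of `b` bits and record block `j` with content `w` by a
single `1` at the position indexed by `(j, w)`; Merlin tells Bob the content of his block, which
costs `b ≤ log₂ n ≤ hcost` extra bits, so `c·m·b ≤ 2·hcost·vcost`. Adding the two bounds and
using `log₂ (n/m) < b + 1` gives the claim with `c' = c/3`.
-/

/-- An online MA communication protocol for a two-party problem `F`.
Merlin (with private randomness `RM`) sends `help1` to Alice (depending only on
Alice's input) and `help2` to Bob (depending on both inputs); Alice then sends a
public-coin (`RA`) message to Bob, who outputs a bit.  Completeness and
soundness errors are at most `1/3`. -/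
structure OnlineMA (A B : Type) (F : A → B → Prop) where
  RM : Type
  RA : Type
  [fRM : Fintype RM]
  [fRA : Fintype RA]
  hcost : ℕ
  vcost : ℕ
  help1 : A → RM → List Bool
  help2 : A → B → RM → List Bool
  amsg : A → List Bool → RA → List Bool
  out : B → List Bool → List Bool → RA → Bool
  hcost_le : ∀ x y rM, (help1 x rM).length + (help2 x y rM).length + 1 ≤ hcost
  vcost_le : ∀ x h rA, (amsg x h rA).length ≤ vcost
  complete : ∀ x y, F x y →
    3 * (Finset.univ.filter fun p : RM × RA =>
        out y (help2 x y p.1) (amsg x (help1 x p.1) p.2) p.2 = false).card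
      ≤ Fintype.card (RM × RA)
  sound : ∀ x y, ¬ F x y → ∀ h1 h2 : List Bool,
    3 * (Finset.univ.filter fun rA : RA =>
        out y h2 (amsg x h1 rA) rA = true).card
      ≤ Fintype.card RA

attribute [instance] OnlineMA.fRM OnlineMA.fRA

open Finset

namespace OnlineMA

variable {A B A' B' : Type} {F : A → B → Prop} {F' : A' → B' → Prop}

def readAdvice (k : ℕ) (h : List Bool) : Fin k → Bool := fun i => h.getD i false

lemma readAdvice_ofFn_append {k : ℕ} (w : Fin k → Bool) (s : List Bool) :
    readAdvice k (List.ofFn w ++ s) = w := by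
  funext i
  rw [readAdvice, List.getD_append _ _ _ _ (by simp), List.getD_eq_getElem _ _ (by simp),
    List.getElem_ofFn]

lemma drop_ofFn_append {k : ℕ} (w : Fin k → Bool) (s : List Bool) :
    (List.ofFn w ++ s).drop k = s :=
  List.drop_left' (List.length_ofFn)

def reduce (P : OnlineMA A B F) (k : ℕ) (enc : A' → A) (advice : A' → B' → Fin k → Bool)
    (query : B' → (Fin k → Bool) → B) (check : B' → (Fin k → Bool) → Bool)
    (complete : ∀ x y, F' x y → check y (advice x y) = true ∧ F (enc x) (query y (advice x y)))
    (sound : ∀ x y w, ¬ F' x y → check y w = true → ¬ F (enc x) (query y w)) :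
    OnlineMA A' B' F' where
  RM := P.RM
  RA := P.RA
  hcost := P.hcost + k
  vcost := P.vcost
  help1 x := P.help1 (enc x)
  help2 x y rM := List.ofFn (advice x y) ++ P.help2 (enc x) (query y (advice x y)) rM
  amsg x := P.amsg (enc x)
  out y h2 msg rA :=
    check y (readAdvice k h2) && P.out (query y (readAdvice k h2)) (h2.drop k) msg rA
  hcost_le x y rM := by
    have := P.hcost_le (enc x) (query y (advice x y)) rM
    simp only [List.length_append, List.length_ofFn]
    omega
  vcost_le x := P.vcost_le (enc x)
  complete x y hxy := by
    obtain ⟨hcheck, hF⟩ := complete x y hxy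
    refine (Nat.mul_le_mul_left 3 (card_le_card fun p hp => ?_)).trans (P.complete _ _ hF)
    simp only [mem_filter, mem_univ, true_and, readAdvice_ofFn_append, drop_ofFn_append,
      hcheck, Bool.true_and] at hp ⊢
    exact hp
  sound x y hxy h1 h2 := by
    by_cases hcheck : check y (readAdvice k h2) = true
    · refine (Nat.mul_le_mul_left 3 (card_le_card fun rA hrA => ?_)).trans
        (P.sound _ _ (sound x y _ hxy hcheck) h1 (h2.drop k))
      simp only [mem_filter, mem_univ, true_and, hcheck, Bool.true_and] at hrA ⊢
      exact hrA
    · simp [hcheck]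

@[simp]
lemma reduce_hcost (P : OnlineMA A B F) (k enc advice query check complete sound) :
    (P.reduce k enc advice query check complete sound : OnlineMA A' B' F').hcost = P.hcost + k :=
  rfl

@[simp]
lemma reduce_vcost (P : OnlineMA A B F) (k enc advice query check complete sound) :
    (P.reduce k enc advice query check complete sound : OnlineMA A' B' F').vcost = P.vcost :=
  rfl

def comap (P : OnlineMA A B F) (f : A' → A) (g : B' → B) (hfg : ∀ x y, F' x y ↔ F (f x) (g y)) :
    OnlineMA A' B' F' :=
  P.reduce 0 f (fun _ _ => Fin.elim0) (fun y _ => g y) (fun _ _ => true)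
    (fun x y h => ⟨rfl, (hfg x y).1 h⟩) (fun x y _ h _ => mt (hfg x y).2 h)

@[simp]
lemma comap_hcost (P : OnlineMA A B F) (f : A' → A) (g : B' → B) (hfg) :
    (P.comap f g hfg : OnlineMA A' B' F').hcost = P.hcost :=
  rfl

@[simp]
lemma comap_vcost (P : OnlineMA A B F) (f : A' → A) (g : B' → B) (hfg) :
    (P.comap f g hfg : OnlineMA A' B' F').vcost = P.vcost :=
  rfl

end OnlineMA

abbrev SparseVec (N : Type) [Fintype N] (m : ℕ) :=
  {x : N → Bool // (univ.filter fun i => x i = true).card ≤ m}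

def SparseVec.ofFinset {N : Type} [Fintype N] [DecidableEq N] {m : ℕ} (s : Finset N)
    (hs : s.card ≤ m) : SparseVec N m :=
  ⟨fun i => decide (i ∈ s), by simpa using hs⟩

namespace OnlineMA

variable {ι J N : Type} [Fintype ι] [Fintype J] [Fintype N] [DecidableEq N] {m : ℕ}

def denseOfSparse (e : ι ↪ N) (hι : Fintype.card ι ≤ m)
    (P : OnlineMA (SparseVec N m) N fun x i => x.1 i = true) :
    OnlineMA (ι → Bool) ι fun x i => x i = true :=
  P.comap (fun x => .ofFinset ((univ.filter fun i => x i = true).map e)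
      ((card_map _).trans_le ((card_filter_le _ _).trans hι)))
    e fun x i => by simp [SparseVec.ofFinset]

def blockDenseOfSparse {b : ℕ} (e : J × (Fin b → Bool) ↪ N) (hJ : Fintype.card J ≤ m)
    (P : OnlineMA (SparseVec N m) N fun x i => x.1 i = true) :
    OnlineMA (J × Fin b → Bool) (J × Fin b) fun x i => x i = true :=
  P.reduce b (fun x => .ofFinset (univ.image fun j => e (j, fun t => x (j, t)))
      (card_image_le.trans hJ))
    (fun x y t => x (y.1, t)) (fun y w => e (y.1, w)) (fun y w => w y.2)
    (fun x y hxy => ⟨hxy, by simp [SparseVec.ofFinset]⟩)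
    (fun x y w hxy hw => by
      simp only [SparseVec.ofFinset, mem_image, mem_univ, true_and, e.injective.eq_iff,
        Prod.mk.injEq, decide_eq_true_eq, not_exists, not_and]
      rintro j rfl rfl
      exact hxy hw)

end OnlineMA

def DenseIndexBound (c : ℝ) : Prop :=
  ∀ n : ℕ, 0 < n → ∀ P : OnlineMA (Fin n → Bool) (Fin n) (fun x ι => x ι = true),
    c * n ≤ (P.hcost : ℝ) * P.vcost

lemma DenseIndexBound.le_of_fintype {c : ℝ} (H : DenseIndexBound c) {ι : Type} [Fintype ι]
    (P : OnlineMA (ι → Bool) ι fun x i => x i = true) :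
    c * Fintype.card ι ≤ (P.hcost : ℝ) * P.vcost := by
  rcases (Fintype.card ι).eq_zero_or_pos with hι | hι
  · rw [hι, Nat.cast_zero, mul_zero]
    positivity
  · let e := Fintype.equivFin ι
    simpa using H _ hι (P.comap (· ∘ e) e.symm fun x i => by simp)

lemma exists_block_length {m n : ℕ} (hm : 0 < m) (hmn : m ≤ n) :
    ∃ b : ℕ, m * 2 ^ b ≤ n ∧ Real.logb 2 ((n : ℝ) / m) < b + 1 ∧ (b : ℝ) ≤ Real.logb 2 n := by
  have hmR : (0 : ℝ) < m := by exact_mod_cast hm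
  have hratio : 1 ≤ (n : ℝ) / m := by rw [one_le_div hmR]; exact_mod_cast hmn
  have hL : 0 ≤ Real.logb 2 ((n : ℝ) / m) := Real.logb_nonneg one_lt_two hratio
  set b := ⌊Real.logb 2 ((n : ℝ) / m)⌋₊
  have hbL : (b : ℝ) ≤ Real.logb 2 ((n : ℝ) / m) := Nat.floor_le hL
  refine ⟨b, ?_, Nat.lt_floor_add_one _, hbL.trans ?_⟩
  · have h2b : (2 : ℝ) ^ (b : ℝ) ≤ n / m :=
      (Real.le_logb_iff_rpow_le one_lt_two (by positivity)).1 hbL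
    rw [Real.rpow_natCast, le_div_iff₀ hmR] at h2b
    exact_mod_cast (mul_comm _ _).trans_le h2b
  · exact Real.logb_le_logb_of_le one_lt_two (by positivity) (div_le_self (by positivity)
      (by exact_mod_cast hm))

/-- Reduction from dense to sparse INDEX: if every online MA protocol for the
dense INDEX problem on `n'` bits has `hcost·vcost = Ω(n')`, then every online MA
protocol for the `(m,n)`-sparse INDEX problem with `hcost ≥ log n` has
`hcost·vcost = Ω(m·log(n/m))`. -/
theorem stmt_11
    (hdense : ∃ c : ℝ, 0 < c ∧ ∀ n : ℕ, 0 < n →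
      ∀ P : OnlineMA (Fin n → Bool) (Fin n) (fun x ι => x ι = true),
        c * n ≤ (P.hcost : ℝ) * P.vcost) :
    ∃ c' : ℝ, 0 < c' ∧ ∀ m n : ℕ, 0 < m → m ≤ n →
      ∀ P' : OnlineMA {x : Fin n → Bool //
            (Finset.univ.filter fun i => x i = true).card ≤ m}
          (Fin n) (fun x ι => x.1 ι = true),
        Real.logb 2 n ≤ (P'.hcost : ℝ) →
        c' * (m * Real.logb 2 ((n : ℝ) / m)) ≤ (P'.hcost : ℝ) * P'.vcost := by
  obtain ⟨c, hc, H⟩ : ∃ c, 0 < c ∧ DenseIndexBound c := hdense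
  refine ⟨c / 3, by positivity, fun m n hm hmn P' hlog => ?_⟩
  obtain ⟨b, hblocks, hL, hb⟩ := exists_block_length hm hmn
  obtain ⟨e⟩ := Function.Embedding.nonempty_of_card_le (α := Fin m × (Fin b → Bool))
    (β := Fin n) (by simpa [mul_comm] using hblocks)
  have hsingle : c * m ≤ (P'.hcost : ℝ) * P'.vcost := by
    simpa [OnlineMA.denseOfSparse] using
      H.le_of_fintype (P'.denseOfSparse (Fin.castLEEmb hmn) (by simp))
  have hblock : c * (m * b) ≤ (P'.hcost + b : ℝ) * P'.vcost := by
    simpa [OnlineMA.blockDenseOfSparse] using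
      H.le_of_fintype (P'.blockDenseOfSparse e (by simp))
  have hadvice : (b : ℝ) * P'.vcost ≤ P'.hcost * P'.vcost :=
    mul_le_mul_of_nonneg_right (hb.trans hlog) (by positivity)
  calc c / 3 * (m * Real.logb 2 ((n : ℝ) / m))
      ≤ c / 3 * (m * (b + 1)) := by gcongr
    _ ≤ (P'.hcost : ℝ) * P'.vcost := by linarith
end

section
/- Let P(α,β) = Σ_{(b,j)} α^{n(b·log n + j)} β^{n(b·log n + j)} Σ_{(ℓ,ℓ'): ℓ_j=0, ℓ'_j=1} f_ℓ(b) f_{ℓ'}(b) α^ℓ β^{ℓ'} be the formal polynomial over 𝔽_q arising from the fingerprinted injection test, where f_ℓ(b) ∈ 𝔽_q, b ∈ [r], j ∈ [log n], ℓ, ℓ' ∈ [n] (with n(b·log n + j) + ℓ < n(b·log n + j + 1) for ℓ < n). Then the monomial α^{n(b·log n+j)+ℓ} β^{n(b·log n+j)+ℓ'} has coefficient f_ℓ(b)·f_{ℓ'}(b) when ℓ_j = 0 and ℓ'_j = 1 (and 0 otherwise); in particular, distinct tuples (b,j,ℓ,ℓ') with ℓ_j=0, ℓ'_j=1 contribute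 to distinct monomials, and P is the zero polynomial if and only if f_ℓ(b)·f_{ℓ'}(b)=0 for all such tuples. -/
/-!
Each summand of `P` is a single monomial, and since `ℓ, ℓ' < n` and `j < L`, the mixed-radix
exponents `n (b L + j) + ℓ` and `n (b L + j) + ℓ'` determine `(b, j, ℓ, ℓ')`. So distinct summands
are distinct monomials and nothing cancels: every coefficient of `P` is read off a single summand.
-/

open MvPolynomial

theorem Nat.mul_add_eq_mul_add_iff {n m m' a a' : ℕ} (ha : a < n) (ha' : a' < n) :
    n * m + a = n * m' + a' ↔ m = m' ∧ a = a' := by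
  refine ⟨fun h => ?_, fun ⟨rfl, rfl⟩ => rfl⟩
  have hn : 0 < n := by omega
  have hm : m = m' := by
    simpa [Nat.mul_add_div hn, Nat.div_eq_of_lt ha, Nat.div_eq_of_lt ha'] using congrArg (· / n) h
  subst hm
  exact ⟨rfl, by omega⟩

namespace MvPolynomial

variable {R σ ι : Type*} [CommSemiring R] [Fintype ι] {e : ι → σ →₀ ℕ}

theorem coeff_sum_monomial_of_injective (he : e.Injective) (c : ι → R) (i : ι) :
    coeff (e i) (∑ k, monomial (e k) (c k)) = c i := by
  classical
  simp [coeff_sum, coeff_monomial, he.eq_iff]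

theorem sum_monomial_eq_zero_iff_of_injective (he : e.Injective) (c : ι → R) :
    ∑ k, monomial (e k) (c k) = 0 ↔ ∀ k, c k = 0 := by
  refine ⟨fun h k => ?_, fun h => by simp [h]⟩
  rw [← coeff_sum_monomial_of_injective he c k, h, coeff_zero]

theorem ite_C_mul_X_pow_mul_X_pow {p : Prop} [Decidable p] (c : R) (s t : σ) (a b : ℕ) :
    (if p then C c * X s ^ a * X t ^ b else 0) =
      monomial (Finsupp.single s a + Finsupp.single t b) (if p then c else 0) := by
  split_ifs
  · simp [X_pow_eq_monomial, C_mul_monomial, monomial_mul]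
  · simp

end MvPolynomial

theorem fingerprint_exponent_injective (r L n : ℕ) :
    (fun x : Fin r × Fin L × Fin n × Fin n =>
      Finsupp.single (0 : Fin 2) (n * ((x.1 : ℕ) * L + x.2.1) + x.2.2.1) +
        Finsupp.single 1 (n * ((x.1 : ℕ) * L + x.2.1) + x.2.2.2)).Injective := by
  rintro ⟨b, j, ℓ, ℓ'⟩ ⟨b', j', k, k'⟩ h
  have h0 := by simpa using DFunLike.congr_fun h 0
  have h1 := by simpa using DFunLike.congr_fun h 1
  obtain ⟨hbj, hℓ⟩ := (Nat.mul_add_eq_mul_add_iff ℓ.2 k.2).1 h0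
  obtain ⟨-, hℓ'⟩ := (Nat.mul_add_eq_mul_add_iff ℓ'.2 k'.2).1 h1
  rw [mul_comm _ L, mul_comm _ L, Nat.mul_add_eq_mul_add_iff j.2 j'.2] at hbj
  simp [Fin.ext_iff, hbj, hℓ, hℓ']

/-- No-cancellation in the fingerprinted injection polynomial: in
`P(α,β) = ∑_{b,j,ℓ,ℓ' : ℓ_j=0, ℓ'_j=1} f_ℓ(b)·f_{ℓ'}(b)·α^{n(bL+j)+ℓ}·β^{n(bL+j)+ℓ'}`,
the monomial `α^{n(bL+j)+ℓ} β^{n(bL+j)+ℓ'}` has coefficient `f_ℓ(b)·f_{ℓ'}(b)`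
when `ℓ_j = 0` and `ℓ'_j = 1` (and `0` otherwise), and `P = 0` iff all these
products vanish. -/
theorem stmt_16 (F : Type*) [Field F] (r L n : ℕ)
    (f : Fin n → Fin r → F)
    (P : MvPolynomial (Fin 2) F)
    (hP : P = ∑ b : Fin r, ∑ j : Fin L, ∑ ℓ : Fin n, ∑ ℓ' : Fin n,
      if Nat.testBit (ℓ : ℕ) j = false ∧ Nat.testBit (ℓ' : ℕ) j = true then
        MvPolynomial.C (f ℓ b * f ℓ' b) *
          X 0 ^ (n * ((b : ℕ) * L + (j : ℕ)) + (ℓ : ℕ)) *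
          X 1 ^ (n * ((b : ℕ) * L + (j : ℕ)) + (ℓ' : ℕ))
      else 0) :
    (∀ (b : Fin r) (j : Fin L) (ℓ ℓ' : Fin n),
      MvPolynomial.coeff
        (Finsupp.single 0 (n * ((b : ℕ) * L + (j : ℕ)) + (ℓ : ℕ)) +
         Finsupp.single 1 (n * ((b : ℕ) * L + (j : ℕ)) + (ℓ' : ℕ))) P =
      if Nat.testBit (ℓ : ℕ) j = false ∧ Nat.testBit (ℓ' : ℕ) j = true then
        f ℓ b * f ℓ' b
      else 0) ∧
    (P = 0 ↔ ∀ (b : Fin r) (j : Fin L) (ℓ ℓ' : Fin n),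
      Nat.testBit (ℓ : ℕ) j = false → Nat.testBit (ℓ' : ℕ) j = true →
      f ℓ b * f ℓ' b = 0) := by
  simp only [ite_C_mul_X_pow_mul_X_pow, ← Fintype.sum_prod_type'] at hP
  subst hP
  have he := fingerprint_exponent_injective r L n
  refine ⟨fun b j ℓ ℓ' => coeff_sum_monomial_of_injective he _ (b, j, ℓ, ℓ'), ?_⟩
  rw [sum_monomial_eq_zero_iff_of_injective he]
  simp only [Prod.forall, ite_eq_right_iff, and_imp]
end
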